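/- Under hypotheses (I-a) and (II), for all k ≥ 1, g ≥ 1, indices i < j < i' < j' with j−i > g+k, i'−j > g+k and j'−i' > g+k, and any two k-cylinders C and C': ∫_Ω μ_{θ^i ω}(C)·μ_{θ^j ω}(C)·μ_{θ^{i'} ω}(C')·μ_{θ^{j'} ω}(C') dℙ(ω) ≤ 2α(g)² + 6α(g) + μ(C)²·μ(C')². -/

import Mathlib

open MeasureTheory Filter ProbabilityTheory Set

/-!
The two returns to `C` at times `i, j` and the two returns to `C'` at times `i', j'` are
merged, one gap at a time, into a single cylinder event
`D = (C ∩ σ^{-(j-i)} C) ∩ σ^{-(i'-i)} (C' ∩ σ^{-(j'-i')} C')`.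
Quenched mixing (II), applied at the fibres `θ^i ω` and `θ^{i'} ω`, bounds the fourfold
product pointwise by `μ_{θ^i ω}(D) + 3α + α²`; since `θ` preserves `ℙ`, integrating gives
`μ(D) + 3α + α²`. Annealed mixing (I-a), applied to the same three gaps, bounds `μ(D)` by
`μ(C)² μ(C')² + 3α + α²`.
-/

noncomputable section

/-- The one-sided shift on `ℕ`-indexed sequences. -/
def shiftN {A : Type*} (x : ℕ → A) : ℕ → A := fun n => x (n + 1)

/-- The `k`-cylinder determined by the word `w`. -/
def cyl {A : Type*} (k : ℕ) (w : Fin k → A) : Set (ℕ → A) := {x | ∀ i : Fin k, x (i : ℕ) = w i}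

/-- Membership in the σ-algebra `F₀ⁿ(X)` generated by the `n`-cylinders:
the sets determined by the first `n` coordinates. -/
def cylAlg {A : Type*} (n : ℕ) (B : Set (ℕ → A)) : Prop :=
  ∃ s : Set (Fin n → A), B = {x | (fun i : Fin n => x (i : ℕ)) ∈ s}

/-- Length of the longest common substring of `x` and `y` within the first `n` symbols:
`M_n(x,y) = max{m : x_{i+k} = y_{j+k}, k = 1,…,m, for some 0 ≤ i,j ≤ n-m}`. -/
def Mstat {A : Type*} (x y : ℕ → A) (n : ℕ) : ℕ :=
  sSup {m | ∃ i j : ℕ, i + m ≤ n ∧ j + m ≤ n ∧ ∀ k, 1 ≤ k → k ≤ m → x (i + k) = y (j + k)}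

/-- Lower Rényi entropy `H̲₂(μ) = liminf_k (-1/k) log Σ_{C_k} μ(C_k)²`. -/
def H2low (N : ℕ) (μ : Measure (ℕ → Fin N)) : ℝ :=
  liminf (fun k : ℕ =>
    Real.log (∑ w : Fin k → Fin N, (μ (cyl k w)).toReal ^ 2) / (-(k : ℝ))) atTop

/-- Upper Rényi entropy `H̄₂(μ) = limsup_k (-1/k) log Σ_{C_k} μ(C_k)²`. -/
def H2up (N : ℕ) (μ : Measure (ℕ → Fin N)) : ℝ :=
  limsup (fun k : ℕ =>
    Real.log (∑ w : Fin k → Fin N, (μ (cyl k w)).toReal ^ 2) / (-(k : ℝ))) atTop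

/-- `h₀ = liminf_k (-1/k) log ∫_Ω max_{C_k} μ_ω(C_k) dℙ`. -/
def h0lim {Ω : Type*} [MeasurableSpace Ω] (N : ℕ) (P : Measure Ω)
    (κ : Kernel Ω (ℕ → Fin N)) : ℝ :=
  liminf (fun k : ℕ =>
    Real.log (∫ ω, (⨆ w : Fin k → Fin N, ((κ ω) (cyl k w)).toReal) ∂P) / (-(k : ℝ))) atTop

/-- The marginal measure `μ = ∫_Ω μ_ω dℙ`, evaluated (as a real number) on a set. -/
def muBar {Ω X : Type*} [MeasurableSpace Ω] [MeasurableSpace X]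
    (P : Measure Ω) (κ : Kernel Ω X) (B : Set X) : ℝ :=
  ∫ ω, ((κ ω) B).toReal ∂P

section Cylinders

variable {A : Type*}

lemma shiftN_iterate_apply (p : ℕ) (x : ℕ → A) (n : ℕ) : shiftN^[p] x n = x (n + p) := by
  induction p generalizing x with
  | zero => rfl
  | succ q ih => exact ih (shiftN x)

lemma measurable_shiftN [MeasurableSpace A] : Measurable (shiftN : (ℕ → A) → ℕ → A) :=
  measurable_pi_lambda _ fun n => measurable_pi_apply (n + 1)

def fourfoldEvent (C C' : Set (ℕ → A)) (i j i' j' : ℕ) : Set (ℕ → A) :=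
  (C ∩ shiftN^[j - i] ⁻¹' C) ∩ shiftN^[i' - i] ⁻¹' (C' ∩ shiftN^[j' - i'] ⁻¹' C')

lemma measurableSet_fourfoldEvent [MeasurableSpace A] {C C' : Set (ℕ → A)} (i j i' j' : ℕ)
    (hC : MeasurableSet C) (hC' : MeasurableSet C') :
    MeasurableSet (fourfoldEvent C C' i j i' j') :=
  (hC.inter (measurable_shiftN.iterate _ hC)).inter
    (measurable_shiftN.iterate _ (hC'.inter (measurable_shiftN.iterate _ hC')))

lemma cylAlg_cyl {k n : ℕ} (w : Fin k → A) (h : k ≤ n) : cylAlg n (cyl k w) :=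
  ⟨{v | ∀ i : Fin k, v (Fin.castLE h i) = w i}, rfl⟩

namespace cylAlg

variable {n m : ℕ} {B B' : Set (ℕ → A)}

lemma mono (hB : cylAlg n B) (hnm : n ≤ m) : cylAlg m B := by
  obtain ⟨s, rfl⟩ := hB
  exact ⟨{v | (fun i : Fin n => v (Fin.castLE hnm i)) ∈ s}, rfl⟩

lemma inter (hB : cylAlg n B) (hB' : cylAlg n B') : cylAlg n (B ∩ B') := by
  obtain ⟨s, rfl⟩ := hB
  obtain ⟨s', rfl⟩ := hB'
  exact ⟨s ∩ s', rfl⟩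

lemma preimage_shiftN_iterate (p : ℕ) (hB : cylAlg m B) :
    cylAlg (p + m) (shiftN^[p] ⁻¹' B) := by
  obtain ⟨s, rfl⟩ := hB
  refine ⟨{v | (fun i : Fin m => v ⟨p + i, by omega⟩) ∈ s}, ?_⟩
  ext x
  simp only [mem_preimage, mem_ofPred_eq, shiftN_iterate_apply, add_comm]

lemma inter_preimage_shiftN_iterate {p : ℕ} (hB : cylAlg n B) (hB' : cylAlg m B')
    (hnp : n ≤ p) : cylAlg (p + m) (B ∩ shiftN^[p] ⁻¹' B') :=
  (hB.mono (by omega)).inter (hB'.preimage_shiftN_iterate p)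

lemma measurableSet [MeasurableSpace A] [MeasurableSingletonClass A] [Countable A]
    (hB : cylAlg n B) : MeasurableSet B := by
  obtain ⟨s, rfl⟩ := hB
  exact measurable_pi_lambda _ (fun i : Fin n => measurable_pi_apply (i : ℕ))
    s.to_countable.measurableSet

end cylAlg

end Cylinders

lemma mul_le_mul_add_of_le_add {p q r s a : ℝ} (hp : 0 ≤ p) (hr : 0 ≤ r) (hq : q ≤ 1)
    (hs : s ≤ 1) (ha : 0 ≤ a) (hpq : p ≤ q + a) (hrs : r ≤ s + a) :
    p * r ≤ q * s + 2 * a + a ^ 2 := by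
  nlinarith [mul_le_mul hpq hrs hr (hp.trans hpq)]

section Mixing

variable {Ω : Type*} [MeasurableSpace Ω] {N : ℕ}

/-- Hypothesis (I-a). -/
def AnnealedMixing (P : Measure Ω) (κ : Kernel Ω (ℕ → Fin N)) (α : ℕ → ℝ) : Prop :=
  ∀ n m g : ℕ, 1 ≤ n → 1 ≤ m → 1 ≤ g →
    ∀ As Bs : Set (ℕ → Fin N), cylAlg n As → cylAlg m Bs →
      |muBar P κ (As ∩ shiftN^[g + n] ⁻¹' Bs) - muBar P κ As * muBar P κ Bs| ≤ α g

/-- Hypothesis (II). -/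
def QuenchedMixing (P : Measure Ω) (θ : Ω → Ω) (κ : Kernel Ω (ℕ → Fin N)) (α : ℕ → ℝ) :
    Prop :=
  ∀ n m g : ℕ, 1 ≤ n → 1 ≤ m → 1 ≤ g →
    ∀ As Bs : Set (ℕ → Fin N), cylAlg n As → cylAlg m Bs →
      ∀ᵐ ω ∂P, |((κ ω) (As ∩ shiftN^[g + n] ⁻¹' Bs)).toReal -
        ((κ ω) As).toReal * ((κ (θ^[n + g] ω)) Bs).toReal| ≤ α g

variable {P : Measure Ω} {κ : Kernel Ω (ℕ → Fin N)} {θ : Ω → Ω} {α : ℕ → ℝ}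
  {n m g k : ℕ} {B C C' : Set (ℕ → Fin N)}

lemma muBar_nonneg (S : Set (ℕ → Fin N)) : 0 ≤ muBar P κ S :=
  integral_nonneg fun _ => ENNReal.toReal_nonneg

lemma muBar_le_one [IsProbabilityMeasure P] [IsMarkovKernel κ] (S : Set (ℕ → Fin N)) :
    muBar P κ S ≤ 1 := by
  simpa [muBar] using integral_mono_of_nonneg (ae_of_all _ fun _ => ENNReal.toReal_nonneg)
    (integrable_const (μ := P) (1 : ℝ))
    (ae_of_all _ fun ω => measureReal_le_one (μ := κ ω) (s := S))

lemma integrable_kernel_iterate [IsFiniteMeasure P] [IsMarkovKernel κ] (hθ : Measurable θ)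
    (q : ℕ) (hS : MeasurableSet B) : Integrable (fun ω => (κ (θ^[q] ω) B).toReal) P :=
  .of_bound ((κ.measurable_coe hS).comp (hθ.iterate q)).ennreal_toReal.aestronglyMeasurable 1
    (ae_of_all _ fun _ => by
      rw [Real.norm_of_nonneg ENNReal.toReal_nonneg]
      exact measureReal_le_one)

lemma integral_kernel_iterate_eq_muBar [IsMarkovKernel κ] (hθ : MeasurePreserving θ P P)
    (q : ℕ) (hS : MeasurableSet B) :
    ∫ ω, (κ (θ^[q] ω) B).toReal ∂P = muBar P κ B := by
  have hq := hθ.iterate q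
  rw [← integral_map hq.measurable.aemeasurable
    (κ.measurable_coe hS).ennreal_toReal.aestronglyMeasurable, hq.map_eq, muBar]

namespace AnnealedMixing

lemma nonneg (h : AnnealedMixing P κ α) (hg : 1 ≤ g) : 0 ≤ α g :=
  (abs_nonneg _).trans (h 1 1 g le_rfl le_rfl hg univ univ ⟨univ, rfl⟩ ⟨univ, rfl⟩)

lemma muBar_inter_le (h : AnnealedMixing P κ α) (hg : 1 ≤ g) (hm : 1 ≤ m)
    (hB : cylAlg n B) (hC : cylAlg m C) {p : ℕ} (hgap : n + g < p) :
    muBar P κ (B ∩ shiftN^[p] ⁻¹' C) ≤ muBar P κ B * muBar P κ C + α g := by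
  have := h (p - g) m g (by omega) hm hg B C (hB.mono (by omega)) hC
  rw [show g + (p - g) = p by omega] at this
  linarith [(abs_le.mp this).2]

lemma muBar_fourfold_le [IsProbabilityMeasure P] [IsMarkovKernel κ]
    (h : AnnealedMixing P κ α) (hg : 1 ≤ g) (hk : 1 ≤ k) (hC : cylAlg k C)
    (hC' : cylAlg k C') {i j i' j' : ℕ}
    (h1 : g + k < j - i) (h2 : g + k < i' - j) (h3 : g + k < j' - i') :
    muBar P κ (fourfoldEvent C C' i j i' j') ≤
      muBar P κ C ^ 2 * muBar P κ C' ^ 2 + 3 * α g + α g ^ 2 := by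
  have hCC := h.muBar_inter_le hg hk hC hC (p := j - i) (by omega)
  have hC'C' := h.muBar_inter_le hg hk hC' hC' (p := j' - i') (by omega)
  have hD := h.muBar_inter_le hg (by omega)
    (hC.inter_preimage_shiftN_iterate hC (p := j - i) (by omega))
    (hC'.inter_preimage_shiftN_iterate hC' (p := j' - i') (by omega)) (p := i' - i) (by omega)
  have := mul_le_mul_add_of_le_add (muBar_nonneg _) (muBar_nonneg _)
    (mul_le_one₀ (muBar_le_one C) (muBar_nonneg C) (muBar_le_one C))
    (mul_le_one₀ (muBar_le_one C') (muBar_nonneg C') (muBar_le_one C')) (h.nonneg hg) hCC hC'C'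
  rw [fourfoldEvent]
  linarith

end AnnealedMixing

namespace QuenchedMixing

lemma ae_mul_le (h : QuenchedMixing P θ κ α) (hθ : MeasurePreserving θ P P) (hg : 1 ≤ g)
    (hm : 1 ≤ m) (hB : cylAlg n B) (hC : cylAlg m C) {q r : ℕ} (hgap : n + g < r - q) :
    ∀ᵐ ω ∂P, (κ (θ^[q] ω) B).toReal * (κ (θ^[r] ω) C).toReal ≤
      (κ (θ^[q] ω) (B ∩ shiftN^[r - q] ⁻¹' C)).toReal + α g := by
  have := h (r - q - g) m g (by omega) hm hg B C (hB.mono (by omega)) hC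
  rw [show g + (r - q - g) = r - q by omega, show r - q - g + g = r - q by omega] at this
  filter_upwards [(hθ.iterate q).quasiMeasurePreserving.ae this] with ω hω
  rw [← Function.iterate_add_apply, show r - q + q = r by omega] at hω
  linarith [(abs_le.mp hω).1]

lemma ae_fourfold_le [IsMarkovKernel κ] (h : QuenchedMixing P θ κ α)
    (hθ : MeasurePreserving θ P P) (hα : 0 ≤ α g) (hg : 1 ≤ g) (hk : 1 ≤ k)
    (hC : cylAlg k C) (hC' : cylAlg k C') {i j i' j' : ℕ}
    (h1 : g + k < j - i) (h2 : g + k < i' - j) (h3 : g + k < j' - i') :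
    ∀ᵐ ω ∂P, (κ (θ^[i] ω) C).toReal * (κ (θ^[j] ω) C).toReal * (κ (θ^[i'] ω) C').toReal *
        (κ (θ^[j'] ω) C').toReal ≤
      (κ (θ^[i] ω) (fourfoldEvent C C' i j i' j')).toReal + 3 * α g + α g ^ 2 := by
  filter_upwards [h.ae_mul_le hθ hg hk hC hC (q := i) (r := j) (by omega),
    h.ae_mul_le hθ hg hk hC' hC' (q := i') (r := j') (by omega),
    h.ae_mul_le hθ hg (by omega) (hC.inter_preimage_shiftN_iterate hC (p := j - i) (by omega))
      (hC'.inter_preimage_shiftN_iterate hC' (p := j' - i') (by omega)) (q := i) (r := i')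
      (by omega)]
    with ω hCC hC'C' hD
  have := mul_le_mul_add_of_le_add (hpq := hCC) (hrs := hC'C') (by positivity) (by positivity)
    measureReal_le_one measureReal_le_one hα
  simp only [measureReal_def, ← mul_assoc] at this
  rw [fourfoldEvent]
  linarith

end QuenchedMixing

end Mixing

theorem fourfold_product_bound_general
    {Ω : Type*} [MeasurableSpace Ω] {N : ℕ}
    (P : Measure Ω) [IsProbabilityMeasure P]
    (θ : Ω ≃ᵐ Ω) (hθ : Ergodic θ P)
    (κ : Kernel Ω (ℕ → Fin N)) [IsMarkovKernel κ]
    (αf : ℕ → ℝ)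
    (hIa : ∀ n m g : ℕ, 1 ≤ n → 1 ≤ m → 1 ≤ g →
      ∀ As Bs : Set (ℕ → Fin N), cylAlg n As → cylAlg m Bs →
        |muBar P κ (As ∩ shiftN^[g + n] ⁻¹' Bs) - muBar P κ As * muBar P κ Bs| ≤ αf g)
    (hII : ∀ n m g : ℕ, 1 ≤ n → 1 ≤ m → 1 ≤ g →
      ∀ As Bs : Set (ℕ → Fin N), cylAlg n As → cylAlg m Bs →
        ∀ᵐ ω ∂P, |((κ ω) (As ∩ shiftN^[g + n] ⁻¹' Bs)).toReal -
          ((κ ω) As).toReal * ((κ ((⇑θ)^[n + g] ω)) Bs).toReal| ≤ αf g)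
    (k g : ℕ) (hk : 1 ≤ k) (hg : 1 ≤ g)
    (i j i' j' : ℕ)
    (h1 : g + k < j - i) (h2 : g + k < i' - j) (h3 : g + k < j' - i')
    (w w' : Fin k → Fin N) :
    ∫ ω, ((κ ((⇑θ)^[i] ω)) (cyl k w)).toReal * ((κ ((⇑θ)^[j] ω)) (cyl k w)).toReal *
        ((κ ((⇑θ)^[i'] ω)) (cyl k w')).toReal * ((κ ((⇑θ)^[j'] ω)) (cyl k w')).toReal ∂P ≤
      2 * αf g ^ 2 + 6 * αf g + (muBar P κ (cyl k w)) ^ 2 * (muBar P κ (cyl k w')) ^ 2 := by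
  have hIa : AnnealedMixing P κ αf := hIa
  have hII : QuenchedMixing P θ κ αf := hII
  have hC := cylAlg_cyl w le_rfl
  have hC' := cylAlg_cyl w' le_rfl
  have hmp := hθ.toMeasurePreserving
  have hD := measurableSet_fourfoldEvent i j i' j' hC.measurableSet hC'.measurableSet
  have hint := integrable_kernel_iterate (P := P) (κ := κ) θ.measurable i hD
  calc _ ≤ ∫ ω, ((κ ((⇑θ)^[i] ω)) (fourfoldEvent (cyl k w) (cyl k w') i j i' j')).toReal
          + (3 * αf g + αf g ^ 2) ∂P :=
        integral_mono_of_nonneg (ae_of_all _ fun _ => by positivity)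
          (hint.add (integrable_const _)) <| by
            filter_upwards [hII.ae_fourfold_le hmp (hIa.nonneg hg) hg hk hC hC' h1 h2 h3]
              with ω hω
            linarith
    _ = muBar P κ (fourfoldEvent (cyl k w) (cyl k w') i j i' j') + (3 * αf g + αf g ^ 2) := by
        rw [integral_add hint (integrable_const _), integral_const, probReal_univ, one_smul,
          integral_kernel_iterate_eq_muBar hmp i hD]
    _ ≤ _ := by linarith [hIa.muBar_fourfold_le hg hk hC hC' h1 h2 h3]

/-- Under hypotheses (I-a) and (II), for all `k, g ≥ 1`, indices
`i < j < i' < j'` with `j−i > g+k`, `i'−j > g+k`, `j'−i' > g+k`, and any two `k`-cylinders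
`C`, `C'`:
`∫_Ω μ_{θ^i ω}(C)·μ_{θ^j ω}(C)·μ_{θ^{i'} ω}(C')·μ_{θ^{j'} ω}(C') dℙ
  ≤ 2α(g)² + 6α(g) + μ(C)²·μ(C')²`. -/
theorem fourfold_product_bound
    {Ω : Type*} [MeasurableSpace Ω] {N : ℕ}
    (P : Measure Ω) [IsProbabilityMeasure P]
    (θ : Ω ≃ᵐ Ω) (hθ : Ergodic θ P)
    (κ : Kernel Ω (ℕ → Fin N)) [IsMarkovKernel κ]
    (hequiv : ∀ᵐ ω ∂P, ∀ i : ℕ, (κ ω).map (shiftN^[i]) = κ ((⇑θ)^[i] ω))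
    (αf : ℕ → ℝ)
    (hIa : ∀ n m g : ℕ, 1 ≤ n → 1 ≤ m → 1 ≤ g →
      ∀ As Bs : Set (ℕ → Fin N), cylAlg n As → cylAlg m Bs →
        |muBar P κ (As ∩ shiftN^[g + n] ⁻¹' Bs) - muBar P κ As * muBar P κ Bs| ≤ αf g)
    (hII : ∀ n m g : ℕ, 1 ≤ n → 1 ≤ m → 1 ≤ g →
      ∀ As Bs : Set (ℕ → Fin N), cylAlg n As → cylAlg m Bs →
        ∀ᵐ ω ∂P, |((κ ω) (As ∩ shiftN^[g + n] ⁻¹' Bs)).toReal -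
          ((κ ω) As).toReal * ((κ ((⇑θ)^[n + g] ω)) Bs).toReal| ≤ αf g)
    (k g : ℕ) (hk : 1 ≤ k) (hg : 1 ≤ g)
    (i j i' j' : ℕ) (hij : i < j) (hji' : j < i') (hi'j' : i' < j')
    (h1 : g + k < j - i) (h2 : g + k < i' - j) (h3 : g + k < j' - i')
    (w w' : Fin k → Fin N) :
    ∫ ω, ((κ ((⇑θ)^[i] ω)) (cyl k w)).toReal * ((κ ((⇑θ)^[j] ω)) (cyl k w)).toReal *
        ((κ ((⇑θ)^[i'] ω)) (cyl k w')).toReal * ((κ ((⇑θ)^[j'] ω)) (cyl k w')).toReal ∂P ≤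
      2 * αf g ^ 2 + 6 * αf g + (muBar P κ (cyl k w)) ^ 2 * (muBar P κ (cyl k w')) ^ 2 :=
  fourfold_product_bound_general P θ hθ κ αf hIa hII k g hk hg i j i' j' h1 h2 h3 w w'
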